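/- Shifting along a subchain preserves MXS+EFL: if f is an MXS+EFL association function for partition X and c = (q_s,...,q_0) is a subchain of the envy graph G(X, f) (each agent f(q_{ℓ+1}) envies X_{q_ℓ} relative to X_{q_{ℓ+1}}), then the function f' obtained by setting f'(q_ℓ) = f(q_{ℓ+1}) for ℓ < s and f'(q_s) = 0 is also MXS+EFL for X; moreover D(f') = (D(f) ∪ {q_0}) \ {q_s}, I(f') ⊆ I(f), every agent in I(f') weakly gains value, and any source bundle of G(X, f) remains a source in G(X, f'). -/

import Mathlib

open Finset

/-- `X` is a partition of the bundle `S` into `k` bundles (bundles may be empty). -/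
def IsPartitionOn {G : Type*} [DecidableEq G] {k : ℕ} (S : Finset G)
    (X : Fin k → Finset G) : Prop :=
  (∀ i j : Fin k, i ≠ j → Disjoint (X i) (X j)) ∧ Finset.univ.biUnion X = S

/-- Bundle `Y b` is EFX-feasible for valuation `v` in partition `Y`. -/
def EFXfeasibleIn {G : Type*} [DecidableEq G] {k : ℕ}
    (v : Finset G → ℝ) (Y : Fin k → Finset G) (b : Fin k) : Prop :=
  ∀ m, ∀ g ∈ Y m, v ((Y m).erase g) ≤ v (Y b)

/-- Bundle `X b` is EFL-feasible for valuation `v` in partition `X`. -/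
def EFLfeasibleIn {G : Type*} [DecidableEq G] {k : ℕ}
    (v : Finset G → ℝ) (X : Fin k → Finset G) (b : Fin k) : Prop :=
  ∀ m, (X m).card ≤ 1 ∨ ∃ g ∈ X m, v {g} ≤ v (X b) ∧ v ((X m).erase g) ≤ v (X b)

/-- Bundle `X b` is k-MXS-feasible for valuation `v` in a partition `X` of all goods. -/
def MXSfeasibleIn {G : Type*} [DecidableEq G] [Fintype G] {k : ℕ}
    (v : Finset G → ℝ) (X : Fin k → Finset G) (b : Fin k) : Prop :=
  ∃ Y : Fin k → Finset G, IsPartitionOn Finset.univ Y ∧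
    EFXfeasibleIn v Y b ∧ v (Y b) ≤ v (X b)

/-- `f` is an MXS+EFL association function for `X`. -/
def IsMXSEFL {G : Type*} [DecidableEq G] [Fintype G] {k n : ℕ}
    (v : Fin n → Finset G → ℝ) (X : Fin k → Finset G)
    (f : Fin k → Option (Fin n)) : Prop :=
  ∀ ℓ a, f ℓ = some a → MXSfeasibleIn (v a) X ℓ ∧ EFLfeasibleIn (v a) X ℓ

/-- Edge of the generalized envy graph. -/
def EnvyEdge {G : Type*} {k n : ℕ} (v : Fin n → Finset G → ℝ)
    (X : Fin k → Finset G) (f : Fin k → Option (Fin n)) (a b : Fin k) : Prop :=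
  ∃ i, f a = some i ∧ v i (X a) < v i (X b)

/-!
Under the shift every associated agent either keeps its bundle or receives the bundle it
envied along the chain, so it values its new bundle weakly more than its old one. Both
MXS- and EFL-feasibility are upward closed in the agent's value of the bundle, and an envy
edge out of the new bundle yields one out of the old bundle.
-/

section Feasibility

variable {G : Type*} [DecidableEq G] {k : ℕ} {v : Finset G → ℝ} {X : Fin k → Finset G}
  {b ℓ : Fin k}

theorem IsPartitionOn.comp_perm {S : Finset G} {Y : Fin k → Finset G}
    (hY : IsPartitionOn S Y) (e : Equiv.Perm (Fin k)) : IsPartitionOn S (Y ∘ e) := by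
  refine ⟨fun i j hij => hY.1 _ _ (e.injective.ne hij), ?_⟩
  rw [← hY.2]
  ext x
  simp only [mem_biUnion, mem_univ, true_and, Function.comp_apply]
  exact (e.surjective.exists (p := (x ∈ Y ·))).symm

theorem EFLfeasibleIn.of_le (h : EFLfeasibleIn v X b) (hle : v (X b) ≤ v (X ℓ)) :
    EFLfeasibleIn v X ℓ := fun m =>
  (h m).imp_right fun ⟨g, hg, h₁, h₂⟩ => ⟨g, hg, h₁.trans hle, h₂.trans hle⟩

/-- The witness partition for `b` serves for `ℓ` after swapping its bundles `b` and `ℓ`. -/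
theorem MXSfeasibleIn.of_le [Fintype G] (h : MXSfeasibleIn v X b)
    (hle : v (X b) ≤ v (X ℓ)) : MXSfeasibleIn v X ℓ := by
  obtain ⟨Y, hY, hEFX, hvY⟩ := h
  refine ⟨Y ∘ Equiv.swap ℓ b, hY.comp_perm _, fun m g hg => ?_, ?_⟩ <;>
    simp only [Function.comp_apply, Equiv.swap_apply_left]
  · exact hEFX _ g hg
  · exact hvY.trans hle

end Feasibility

theorem EnvyEdge.ne_none {G : Type*} {k n : ℕ} {v : Fin n → Finset G → ℝ}
    {X : Fin k → Finset G} {f : Fin k → Option (Fin n)} {a b : Fin k}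
    (h : EnvyEdge v X f a b) : f a ≠ none := by
  obtain ⟨i, hi, -⟩ := h
  simp [hi]

section Shift

variable {k n s : ℕ} {f f' : Fin k → Option (Fin n)} {q : Fin (s + 1) → Fin k}

theorem shift_eq_some_cases
    (hf'1 : ∀ ℓ : Fin s, f' (q ℓ.castSucc) = f (q ℓ.succ))
    (hf'2 : f' (q (Fin.last s)) = none)
    (hf'3 : ∀ m, (∀ ℓ, q ℓ ≠ m) → f' m = f m) {m : Fin k} {a : Fin n}
    (h : f' m = some a) :
    (f m = some a ∧ ∀ ℓ, q ℓ ≠ m) ∨ ∃ j : Fin s, m = q j.castSucc ∧ f (q j.succ) = some a := by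
  by_cases hm : ∃ i, q i = m
  · obtain ⟨i, rfl⟩ := hm
    rcases i.eq_castSucc_or_eq_last with ⟨j, rfl⟩ | rfl
    · exact .inr ⟨j, rfl, hf'1 j ▸ h⟩
    · simp [hf'2] at h
  · simp only [not_exists] at hm
    exact .inl ⟨hf'3 m hm ▸ h, hm⟩

theorem shift_ne_none_iff (hq : Function.Injective q)
    (hchain : ∀ ℓ : Fin s, f (q ℓ.succ) ≠ none)
    (hf'1 : ∀ ℓ : Fin s, f' (q ℓ.castSucc) = f (q ℓ.succ))
    (hf'2 : f' (q (Fin.last s)) = none)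
    (hf'3 : ∀ m, (∀ ℓ, q ℓ ≠ m) → f' m = f m) (m : Fin k) :
    f' m ≠ none ↔ (f m ≠ none ∨ m = q 0) ∧ m ≠ q (Fin.last s) := by
  constructor
  · intro h
    obtain ⟨a, ha⟩ := Option.ne_none_iff_exists'.mp h
    rcases shift_eq_some_cases hf'1 hf'2 hf'3 ha with ⟨hf, hm⟩ | ⟨j, rfl, -⟩
    · exact ⟨.inl (by simp [hf]), (hm _).symm⟩
    · refine ⟨?_, fun he => j.castSucc_ne_last (hq he)⟩
      rcases j.castSucc.eq_zero_or_eq_succ with h0 | ⟨j', hj'⟩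
      · exact .inr (by rw [h0])
      · exact .inl (hj' ▸ hchain j')
  · rintro ⟨hdom, hlast⟩
    by_cases hm : ∃ i, q i = m
    · obtain ⟨i, rfl⟩ := hm
      rcases i.eq_castSucc_or_eq_last with ⟨j, rfl⟩ | rfl
      · exact hf'1 j ▸ hchain j
      · exact absurd rfl hlast
    · simp only [not_exists] at hm
      rw [hf'3 m hm]
      exact hdom.resolve_right (Ne.symm (hm 0))

variable {G : Type*} {v : Fin n → Finset G → ℝ} {X : Fin k → Finset G}

theorem exists_le_of_shift_eq_some
    (hchain : ∀ ℓ : Fin s, EnvyEdge v X f (q ℓ.succ) (q ℓ.castSucc))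
    (hf'1 : ∀ ℓ : Fin s, f' (q ℓ.castSucc) = f (q ℓ.succ))
    (hf'2 : f' (q (Fin.last s)) = none)
    (hf'3 : ∀ m, (∀ ℓ, q ℓ ≠ m) → f' m = f m) {m : Fin k} {a : Fin n}
    (h : f' m = some a) : ∃ p, f p = some a ∧ v a (X p) ≤ v a (X m) := by
  rcases shift_eq_some_cases hf'1 hf'2 hf'3 h with ⟨hf, -⟩ | ⟨j, rfl, hf⟩
  · exact ⟨m, hf, le_rfl⟩
  · obtain ⟨i, hi, hlt⟩ := hchain j
    obtain rfl : i = a := Option.some_injective _ (hi.symm.trans hf)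
    exact ⟨_, hf, hlt.le⟩

end Shift

theorem shift_subchain_properties_general
    {G : Type*} [DecidableEq G] [Fintype G] {k n s : ℕ}
    (v : Fin n → Finset G → ℝ)
    (X : Fin k → Finset G)
    (f f' : Fin k → Option (Fin n))
    (hinj : ∀ ℓ z a, f ℓ = some a → f z = some a → ℓ = z)
    (hfair : IsMXSEFL v X f)
    (q : Fin (s + 1) → Fin k) (hq : Function.Injective q)
    (hchain : ∀ ℓ : Fin s, EnvyEdge v X f (q ℓ.succ) (q ℓ.castSucc))
    (hf'1 : ∀ ℓ : Fin s, f' (q ℓ.castSucc) = f (q ℓ.succ))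
    (hf'2 : f' (q (Fin.last s)) = none)
    (hf'3 : ∀ m, (∀ ℓ, q ℓ ≠ m) → f' m = f m) :
    IsMXSEFL v X f' ∧
    {ℓ : Fin k | f' ℓ ≠ none} =
      ({ℓ : Fin k | f ℓ ≠ none} ∪ {q 0}) \ {q (Fin.last s)} ∧
    {a : Fin n | ∃ ℓ, f' ℓ = some a} ⊆ {a : Fin n | ∃ ℓ, f ℓ = some a} ∧
    (∀ (a : Fin n) (m m' : Fin k), f m = some a → f' m' = some a →
      v a (X m) ≤ v a (X m')) ∧
    (∀ r : Fin k, (∀ ℓ, ¬ EnvyEdge v X f ℓ r) → ∀ ℓ, ¬ EnvyEdge v X f' ℓ r) := by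
  have handover {m : Fin k} {a : Fin n} (h : f' m = some a) :=
    exists_le_of_shift_eq_some hchain hf'1 hf'2 hf'3 h
  refine ⟨fun ℓ a ha => ?_, ?_, ?_, ?_, ?_⟩
  · obtain ⟨p, hp, hle⟩ := handover ha
    exact ⟨(hfair p a hp).1.of_le hle, (hfair p a hp).2.of_le hle⟩
  · ext m
    simp only [Set.mem_ofPred_eq, Set.mem_sdiff, Set.mem_union, Set.mem_singleton_iff]
    exact shift_ne_none_iff hq (fun ℓ => (hchain ℓ).ne_none) hf'1 hf'2 hf'3 m
  · rintro a ⟨ℓ, ha⟩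
    obtain ⟨p, hp, -⟩ := handover ha
    exact ⟨p, hp⟩
  · intro a m m' hm hm'
    obtain ⟨p, hp, hle⟩ := handover hm'
    rwa [hinj m p a hm hp]
  · rintro r hr ℓ ⟨i, hi, hlt⟩
    obtain ⟨p, hp, hle⟩ := handover hi
    exact hr p ⟨i, hp, hle.trans_lt hlt⟩

/-- Shifting along a subchain `c = (q_s, …, q_0)` preserves MXS+EFL, frees bundle
`q_s` and associates `q_0`, weakly increases every associated agent's value, and
preserves sources. -/
theorem shift_subchain_properties
    {G : Type*} [DecidableEq G] [Fintype G] {k n s : ℕ}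
    (v : Fin n → Finset G → ℝ)
    (hmono : ∀ a, ∀ A B : Finset G, A ⊆ B → v a A ≤ v a B)
    (X : Fin k → Finset G) (hX : IsPartitionOn Finset.univ X)
    (f f' : Fin k → Option (Fin n))
    (hinj : ∀ ℓ z a, f ℓ = some a → f z = some a → ℓ = z)
    (hfair : IsMXSEFL v X f)
    (q : Fin (s + 1) → Fin k) (hq : Function.Injective q)
    (hchain : ∀ ℓ : Fin s, EnvyEdge v X f (q ℓ.succ) (q ℓ.castSucc))
    (hf'1 : ∀ ℓ : Fin s, f' (q ℓ.castSucc) = f (q ℓ.succ))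
    (hf'2 : f' (q (Fin.last s)) = none)
    (hf'3 : ∀ m, (∀ ℓ, q ℓ ≠ m) → f' m = f m) :
    IsMXSEFL v X f' ∧
    {ℓ : Fin k | f' ℓ ≠ none} =
      ({ℓ : Fin k | f ℓ ≠ none} ∪ {q 0}) \ {q (Fin.last s)} ∧
    {a : Fin n | ∃ ℓ, f' ℓ = some a} ⊆ {a : Fin n | ∃ ℓ, f ℓ = some a} ∧
    (∀ (a : Fin n) (m m' : Fin k), f m = some a → f' m' = some a →
      v a (X m) ≤ v a (X m')) ∧
    (∀ r : Fin k, (∀ ℓ, ¬ EnvyEdge v X f ℓ r) → ∀ ℓ, ¬ EnvyEdge v X f' ℓ r) :=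
  shift_subchain_properties_general v X f f' hinj hfair q hq hchain hf'1 hf'2 hf'3
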